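/- Lemma 3 (Cauchy property of the operator-splitting approximations): Fix t > 0, a measurable β : ℝ → ℝ, and φ ∈ L¹(ℝ × ℝ). Define ψ_t(x,ξ) = φ(x, ξ − β(x) t) and, for each positive integer m, z_m = (G(·, t/m) *ₓ)^m ψ_t, the m-fold partial convolution in the x-variable of the heat kernel at time t/m with ψ_t. Then (z_m)_{m ∈ ℕ} is a Cauchy sequence in L¹(ℝ × ℝ). -/

import Mathlib

open MeasureTheory

noncomputable section

/-- The fundamental solution (heat kernel) of the 1-D diffusion equation,
`G(x,t) = (4πDt)^{-1/2} exp(-x²/(4Dt))`. -/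
def heatKernel (D x t : ℝ) : ℝ :=
  (1 / Real.sqrt (4 * Real.pi * D * t)) * Real.exp (-(x ^ 2) / (4 * D * t))

/-- Partial convolution in the `x`-variable:
`(f *ₓ ψ)(x,ξ) = ∫_ℝ f(x-y) ψ(y,ξ) dy`. -/
def pconv (f : ℝ → ℝ) (ψ : ℝ × ℝ → ℝ) : ℝ × ℝ → ℝ :=
  fun p => ∫ y : ℝ, f (p.1 - y) * ψ (y, p.2)

/-- The operator-splitting approximation at time `t` with `m` steps:
`z_m = (G(·, t/m) *ₓ)^m ψ_t`, where `ψ_t(x,ξ) = φ(x, ξ - β(x) t)`. -/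
def zseq (D t : ℝ) (β : ℝ → ℝ) (φ : ℝ × ℝ → ℝ) (m : ℕ) : ℝ × ℝ → ℝ :=
  (pconv (fun x => heatKernel D x (t / m)))^[m]
    (fun p : ℝ × ℝ => φ (p.1, p.2 - β p.1 * t))

/-! The heat kernels form a convolution semigroup, `G(·,s) * G(·,r) = G(·,s+r)`, as one sees by
completing the square in the exponent. By Fubini the `m`-fold splitting iterate with step `t/m`
therefore equals the single partial convolution with `G(·,t)` on every `ξ`-slice of `ψ_t` that
is integrable, i.e. for almost every `ξ`. So `z_m` does not depend on `m ≥ 1` up to a null set,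
and the sequence is trivially Cauchy in `L¹`. -/

open Real

section HeatKernel

variable {D s r t : ℝ}

lemma heatKernel_nonneg (D x t : ℝ) : 0 ≤ heatKernel D x t := by
  unfold heatKernel
  positivity

lemma heatKernel_le (hD : 0 ≤ D) (ht : 0 ≤ t) (x : ℝ) :
    heatKernel D x t ≤ 1 / √(4 * π * D * t) := by
  unfold heatKernel
  have hexp : exp (-(x ^ 2) / (4 * D * t)) ≤ 1 :=
    exp_le_one_iff.mpr (div_nonpos_of_nonpos_of_nonneg (by nlinarith) (by positivity))
  exact mul_le_of_le_one_right (by positivity) hexp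

lemma continuous_heatKernel (D t : ℝ) : Continuous (heatKernel D · t) := by
  unfold heatKernel
  fun_prop

lemma heatKernel_eq_mul_exp_neg_mul_sq (D x t : ℝ) :
    heatKernel D x t = 1 / √(4 * π * D * t) * exp (-(4 * D * t)⁻¹ * x ^ 2) := by
  rw [heatKernel]
  congr 2
  ring

lemma integrable_heatKernel (hD : 0 < D) (ht : 0 < t) : Integrable (heatKernel D · t) := by
  simp_rw [heatKernel_eq_mul_exp_neg_mul_sq]
  exact (integrable_exp_neg_mul_sq (by positivity)).const_mul _

lemma integral_heatKernel (hD : 0 < D) (ht : 0 < t) : ∫ x, heatKernel D x t = 1 := by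
  simp_rw [heatKernel_eq_mul_exp_neg_mul_sq]
  rw [integral_const_mul, integral_gaussian, div_inv_eq_mul, one_div,
    show π * (4 * D * t) = 4 * π * D * t by ring, inv_mul_cancel₀ (by positivity)]

/-- Completing the square: the product of the two Gaussians factors into the Gaussian of
`x - z` at the total time and a normalised Gaussian in `y`. -/
lemma heatKernel_mul_heatKernel (hD : 0 < D) (hs : 0 < s) (hr : 0 < r) (x y z : ℝ) :
    heatKernel D (x - y) s * heatKernel D (y - z) r =
      heatKernel D (x - z) (s + r) *
        heatKernel D (y - (z + r / (s + r) * (x - z))) (s * r / (s + r)) := by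
  have hroot : √(4 * π * D * s) * √(4 * π * D * r) =
      √(4 * π * D * (s + r)) * √(4 * π * D * (s * r / (s + r))) := by
    rw [← sqrt_mul (by positivity), ← sqrt_mul (by positivity)]
    congr 1
    field_simp
  have hexponent : -(x - y) ^ 2 / (4 * D * s) + -(y - z) ^ 2 / (4 * D * r) =
      -(x - z) ^ 2 / (4 * D * (s + r)) +
        -(y - (z + r / (s + r) * (x - z))) ^ 2 / (4 * D * (s * r / (s + r))) := by
    field_simp
    ring
  simp only [heatKernel, one_div]
  rw [mul_mul_mul_comm, ← exp_add, ← mul_inv, hexponent, hroot, mul_inv, exp_add]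
  ring

lemma integral_heatKernel_mul_heatKernel (hD : 0 < D) (hs : 0 < s) (hr : 0 < r) (x z : ℝ) :
    ∫ y, heatKernel D (x - y) s * heatKernel D (y - z) r = heatKernel D (x - z) (s + r) := by
  simp_rw [heatKernel_mul_heatKernel hD hs hr x _ z]
  rw [integral_const_mul, integral_sub_right_eq_self (heatKernel D · (s * r / (s + r))),
    integral_heatKernel hD (by positivity), mul_one]

end HeatKernel

section PartialConvolution

variable {D s r : ℝ} {ψ : ℝ × ℝ → ℝ} {ξ : ℝ}

lemma pconv_heatKernel_pconv_heatKernel (hD : 0 < D) (hs : 0 < s) (hr : 0 < r)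
    (hψ : Integrable fun y => ψ (y, ξ)) (x : ℝ) :
    pconv (heatKernel D · s) (pconv (heatKernel D · r) ψ) (x, ξ) =
      pconv (heatKernel D · (s + r)) ψ (x, ξ) := by
  set F : ℝ × ℝ → ℝ := fun p => heatKernel D (x - p.1) s * heatKernel D (p.1 - p.2) r * ψ (p.2, ξ)
  have hF_meas : AEStronglyMeasurable F (volume.prod volume) :=
    (((continuous_heatKernel D s).comp (by fun_prop)).mul
      ((continuous_heatKernel D r).comp (by fun_prop))).aestronglyMeasurable.mul hψ.1.comp_snd
  have hF_slice (z : ℝ) : Integrable fun y => F (y, z) := by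
    simp only [F, heatKernel_mul_heatKernel hD hs hr x _ z]
    exact (((integrable_heatKernel hD (by positivity)).comp_sub_right _).const_mul _).mul_const _
  have hF_int : Integrable F (volume.prod volume) := by
    refine (integrable_prod_iff' hF_meas).mpr ⟨.of_forall hF_slice, ?_⟩
    simp only [F, norm_mul, Real.norm_of_nonneg (heatKernel_nonneg _ _ _)]
    simp_rw [integral_mul_const, integral_heatKernel_mul_heatKernel hD hs hr x]
    refine hψ.norm.bdd_mul ((continuous_heatKernel D _).comp (by fun_prop)).aestronglyMeasurable
      (.of_forall fun z => (Real.norm_of_nonneg (heatKernel_nonneg _ _ _)).trans_le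
        (heatKernel_le hD.le (by positivity) _))
  calc pconv (heatKernel D · s) (pconv (heatKernel D · r) ψ) (x, ξ)
      = ∫ y, ∫ z, F (y, z) := by
        simp only [pconv, F, mul_assoc, integral_const_mul]
    _ = ∫ z, ∫ y, F (y, z) := integral_integral_swap (f := fun y z => F (y, z)) hF_int
    _ = pconv (heatKernel D · (s + r)) ψ (x, ξ) := by
        simp only [pconv, F, integral_mul_const, integral_heatKernel_mul_heatKernel hD hs hr]

lemma iterate_pconv_heatKernel (hD : 0 < D) (hs : 0 < s) (hψ : Integrable fun y => ψ (y, ξ))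
    (k : ℕ) (x : ℝ) :
    (pconv (heatKernel D · s))^[k + 1] ψ (x, ξ) = pconv (heatKernel D · ((k + 1) * s)) ψ (x, ξ) := by
  induction k generalizing x with
  | zero => simp
  | succ k ih =>
    have hslice : pconv (heatKernel D · s) ((pconv (heatKernel D · s))^[k + 1] ψ) (x, ξ) =
        pconv (heatKernel D · s) (pconv (heatKernel D · ((k + 1) * s)) ψ) (x, ξ) := by
      simp only [pconv, ih]
    rw [Function.iterate_succ_apply', hslice,
      pconv_heatKernel_pconv_heatKernel hD hs (by positivity) hψ]
    push_cast
    ring_nf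

end PartialConvolution

lemma measurePreserving_shear {β : ℝ → ℝ} (hβ : Measurable β) (t : ℝ) :
    MeasurePreserving (fun p : ℝ × ℝ => (p.1, p.2 - β p.1 * t)) := by
  refine (MeasurePreserving.id volume).skew_product (g := fun a b => b - β a * t) (by fun_prop)
    (.of_forall fun a => ?_)
  simp_rw [sub_eq_add_neg]
  exact map_add_right_eq_self volume _

lemma zseq_ae_eq {D t : ℝ} (hD : 0 < D) (ht : 0 < t) {β : ℝ → ℝ} (hβ : Measurable β)
    {φ : ℝ × ℝ → ℝ} (hφ : Integrable φ) {m : ℕ} (hm : m ≠ 0) :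
    zseq D t β φ m =ᵐ[volume]
      pconv (heatKernel D · t) (fun p => φ (p.1, p.2 - β p.1 * t)) := by
  have hψ : Integrable (fun p : ℝ × ℝ => φ (p.1, p.2 - β p.1 * t)) (volume.prod volume) :=
    ((measurePreserving_shear hβ t).integrable_comp hφ.1).mpr hφ
  filter_upwards [Measure.quasiMeasurePreserving_snd.ae hψ.prod_left_ae] with ⟨x, ξ⟩ hξ
  obtain ⟨k, rfl⟩ := Nat.exists_eq_succ_of_ne_zero hm
  have hsplit : ((k : ℝ) + 1) * (t / (k + 1 : ℕ)) = t := by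
    push_cast
    field_simp
  rw [zseq, iterate_pconv_heatKernel hD (by positivity) hξ, hsplit]

/-- Lemma 3 (Cauchy property of the operator-splitting approximations): for `t > 0`,
measurable `β` and `φ ∈ L¹(ℝ × ℝ)`, the sequence `z_m = (G(·,t/m) *ₓ)^m ψ_t`
(over positive integers `m`) is a Cauchy sequence in `L¹(ℝ × ℝ)`. -/
theorem lemma3_cauchy (D : ℝ) (hD : 0 < D) (t : ℝ) (ht : 0 < t)
    (β : ℝ → ℝ) (hβ : Measurable β) (φ : ℝ × ℝ → ℝ) (hφ : Integrable φ) :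
    ∀ ε > (0:ℝ), ∃ N : ℕ, 1 ≤ N ∧ ∀ p : ℕ, N ≤ p → ∀ q : ℕ, N ≤ q →
      (∫ w : ℝ × ℝ, |zseq D t β φ p w - zseq D t β φ q w|) < ε := by
  intro ε hε
  refine ⟨1, le_rfl, fun p hp q hq => ?_⟩
  have hdiff : (fun w => |zseq D t β φ p w - zseq D t β φ q w|) =ᵐ[volume] 0 := by
    filter_upwards [zseq_ae_eq hD ht hβ hφ (m := p) (by omega),
      zseq_ae_eq hD ht hβ hφ (m := q) (by omega)] with w hwp hwq
    simp [hwp, hwq]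
  rwa [integral_congr_ae hdiff, Pi.zero_def, integral_zero]
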